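/- arXiv:2309.15196 — 2 statements merged into one kernel-verified Lean document; each statement's English description precedes it below -/
import Mathlib

section
/- If G and H are connected graphs, f : V(G) → V(H) is any function, and g ∈ V(G), then the copy gH of H is a convex subgraph of the Sierpiński product G ⊗_f H; that is, every shortest path in G ⊗_f H between two vertices of gH lies entirely inside gH. -/
open SimpleGraph

/-- The Sierpiński product of graphs `G` and `H` with respect to `f`. -/
def sierpinskiProd {α β : Type*} (G : SimpleGraph α) (H : SimpleGraph β) (f : α → β) :
    SimpleGraph (α × β) where
  Adj p q := (p.1 = q.1 ∧ H.Adj p.2 q.2) ∨ (G.Adj p.1 q.1 ∧ p.2 = f q.1 ∧ q.2 = f p.1)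
  symm := by
    refine ⟨?_⟩
    rintro p q (⟨h1, h2⟩ | ⟨h1, h2, h3⟩)
    · exact Or.inl ⟨h1.symm, h2.symm⟩
    · exact Or.inr ⟨h1.symm, h3, h2⟩
  loopless := by
    refine ⟨?_⟩
    rintro p (⟨-, h⟩ | ⟨h, -⟩)
    · exact H.irrefl h
    · exact G.irrefl h

/-- A set `S` of vertices resolves the graph `G`. -/
def IsResolvingSet {V : Type*} (G : SimpleGraph V) (S : Set V) : Prop :=
  ∀ u v : V, (∀ s ∈ S, G.dist u s = G.dist v s) → u = v

/-- The metric dimension of a graph. -/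
noncomputable def metricDim {V : Type*} (G : SimpleGraph V) : ℕ :=
  sInf {n | ∃ S : Set V, S.ncard = n ∧ IsResolvingSet G S}

/-- A graph is a path if it is isomorphic to some path graph. -/
def IsPathGraph {V : Type*} (G : SimpleGraph V) : Prop :=
  ∃ n, Nonempty (G ≃g pathGraph n)

/-- A walk in the Sierpiński product that stays in one layer projects to a walk in `H`
of the same length. -/
lemma sierpinski_layer_proj {α β : Type*} (G : SimpleGraph α) (H : SimpleGraph β)
    (f : α → β) : ∀ {u v : α × β} (q : (sierpinskiProd G H f).Walk u v),
    (∀ x ∈ q.support, x.1 = u.1) → ∃ w : H.Walk u.2 v.2, w.length = q.length := by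
  intro u v q
  induction q with
  | nil => exact fun _ => ⟨SimpleGraph.Walk.nil, rfl⟩
  | @cons u m v e q ih =>
    intro hsupp
    have hm : m.1 = u.1 := hsupp m (by simp [SimpleGraph.Walk.support_cons])
    have hsupp' : ∀ x ∈ q.support, x.1 = m.1 := by
      intro x hx
      rw [hm]
      exact hsupp x (by simp [SimpleGraph.Walk.support_cons, hx])
    obtain ⟨w, hw⟩ := ih hsupp'
    rcases id e with ⟨-, hadj⟩ | ⟨hadj, -, -⟩
    · exact ⟨SimpleGraph.Walk.cons hadj w, by simp [hw]⟩
    · exact absurd (hm ▸ hadj) (G.irrefl)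

/-- Key lemma: any walk in the Sierpiński product either stays in its initial layer, or
admits a strictly shorter pair of "chain" walks in `H`. -/
lemma sierpinski_chain {α β : Type*} (G : SimpleGraph α) (H : SimpleGraph β)
    (f : α → β) : ∀ {u v : α × β} (q : (sierpinskiProd G H f).Walk u v),
    (∀ x ∈ q.support, x.1 = u.1) ∨
    (∃ (A : H.Walk u.2 v.2) (B : H.Walk (f u.1) (f v.1)),
      A.length + B.length < q.length) ∨
    (∃ (A : H.Walk u.2 (f v.1)) (B : H.Walk (f u.1) v.2),
      A.length + B.length < q.length) := by
  intro u v q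
  induction q with
  | nil => exact Or.inl (by simp)
  | @cons u m v e q ih =>
    rcases id e with ⟨h1, hadj⟩ | ⟨hadj, h2, h3⟩
    · -- type-1 edge: stays within a layer
      rcases ih with hlay | ⟨A, B, hAB⟩ | ⟨A, B, hAB⟩
      · left
        intro x hx
        rw [SimpleGraph.Walk.support_cons, List.mem_cons] at hx
        rcases hx with rfl | hx'
        · rfl
        · rw [hlay x hx', h1]
      · refine Or.inr (Or.inl ⟨SimpleGraph.Walk.cons hadj A,
          B.copy (by rw [h1]) rfl, ?_⟩)
        simp only [SimpleGraph.Walk.length_cons, SimpleGraph.Walk.length_copy]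
        omega
      · refine Or.inr (Or.inr ⟨SimpleGraph.Walk.cons hadj A,
          B.copy (by rw [h1]) rfl, ?_⟩)
        simp only [SimpleGraph.Walk.length_cons, SimpleGraph.Walk.length_copy]
        omega
    · -- type-2 edge: u.2 = f m.1, m.2 = f u.1
      rcases ih with hlay | ⟨A, B, hAB⟩ | ⟨A, B, hAB⟩
      · -- the rest stays in layer m.1; so v.1 = m.1
        have hv : v.1 = m.1 := hlay v (SimpleGraph.Walk.end_mem_support q)
        obtain ⟨w, hw⟩ := sierpinski_layer_proj G H f q hlay
        refine Or.inr (Or.inr ⟨(SimpleGraph.Walk.nil : H.Walk (f m.1) (f m.1)).copy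
          h2.symm (by rw [hv]), w.copy (by rw [h3]) rfl, ?_⟩)
        simp [hw]
      · refine Or.inr (Or.inr ⟨B.copy h2.symm rfl, A.copy (by rw [h3]) rfl, ?_⟩)
        simp only [SimpleGraph.Walk.length_cons, SimpleGraph.Walk.length_copy]
        omega
      · refine Or.inr (Or.inl ⟨B.copy h2.symm rfl, A.copy (by rw [h3]) rfl, ?_⟩)
        simp only [SimpleGraph.Walk.length_cons, SimpleGraph.Walk.length_copy]
        omega

/-- The embedding of `H` as the layer `gH` of the Sierpiński product. -/
def layerHom {α β : Type*} (G : SimpleGraph α) (H : SimpleGraph β) (f : α → β) (g : α) :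
    H →g sierpinskiProd G H f where
  toFun y := (g, y)
  map_rel' := fun h => Or.inl ⟨rfl, h⟩

theorem sierpinskiProd_layer_convex {α β : Type*} (G : SimpleGraph α) (H : SimpleGraph β)
    (f : α → β) (hG : G.Connected) (hH : H.Connected) (g : α) (h h' : β)
    (p : (sierpinskiProd G H f).Walk (g, h) (g, h')) (hp : p.IsPath)
    (hlen : p.length = (sierpinskiProd G H f).dist (g, h) (g, h')) :
    ∀ x ∈ p.support, x.1 = g := by
  rcases sierpinski_chain G H f p with hlay | ⟨A, B, hAB⟩ | ⟨A, B, hAB⟩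
  · exact hlay
  · exfalso
    have hd := SimpleGraph.dist_le ((A : H.Walk h h').map (layerHom G H f g))
    rw [SimpleGraph.Walk.length_map] at hd
    have hd' : (sierpinskiProd G H f).dist (g, h) (g, h') ≤ A.length := hd
    omega
  · exfalso
    have hd := SimpleGraph.dist_le ((A.append B : H.Walk h h').map (layerHom G H f g))
    rw [SimpleGraph.Walk.length_map, SimpleGraph.Walk.length_append] at hd
    have hd' : (sierpinskiProd G H f).dist (g, h) (g, h') ≤ A.length + B.length := hd
    omega
end

section
/- Let X' be a forest obtained from a forest X by adding one edge joining two components of X, where all components are trees that are not paths. Then dim(X') ≤ dim(X), where the metric dimension of a forest is the sum of the metric dimensions of its components, i.e., dim equals (number of leaves) minus (number of exterior branch vertices) on each component. -/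
open SimpleGraph

/-- A leaf is a vertex of degree 1. -/
def IsLeaf {V : Type*} (G : SimpleGraph V) (v : V) : Prop := (G.neighborSet v).ncard = 1

/-- A branch vertex is a vertex of degree at least 3. -/
def IsBranchVertex {V : Type*} (G : SimpleGraph V) (v : V) : Prop := 3 <= (G.neighborSet v).ncard

/-- `u` is a terminal leaf of the branch vertex `v`: `v` is the branch vertex nearest to `u`. -/
def IsTerminalLeafOf {V : Type*} (G : SimpleGraph V) (u v : V) : Prop :=
  IsLeaf G u /\ IsBranchVertex G v /\ G.Reachable u v /\
    forall w, IsBranchVertex G w -> G.Reachable u w -> w ≠ v -> G.dist u v < G.dist u w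

/-- An exterior branch vertex has at least one terminal leaf. -/
def IsExteriorBranchVertex {V : Type*} (G : SimpleGraph V) (v : V) : Prop :=
  exists u, IsTerminalLeafOf G u v

/-- The metric dimension of a forest: (number of leaves) minus (number of exterior
branch vertices), which equals the sum over components of their metric dimensions. -/
noncomputable def forestDim {V : Type*} (G : SimpleGraph V) : ℕ :=
  {v | IsLeaf G v}.ncard - {v | IsExteriorBranchVertex G v}.ncard


section Aux
variable {V : Type*}


lemma path_length_eq_dist {G : SimpleGraph V} (hG : G.IsAcyclic) {u v : V}
    (p : G.Walk u v) (hp : p.IsPath) : p.length = G.dist u v := by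
  classical
  have hr : G.Reachable u v := ⟨p⟩
  obtain ⟨q, hq⟩ := hr.exists_walk_length_eq_dist
  have hbp : q.bypass.IsPath := q.bypass_isPath
  have h1 : q.bypass.length ≤ q.length := q.length_bypass_le
  have : (⟨p, hp⟩ : G.Path u v) = ⟨q.bypass, hbp⟩ := hG.path_unique _ _
  have hpq : p = q.bypass := congrArg Subtype.val this
  have h2 : G.dist u v ≤ p.length := SimpleGraph.dist_le p
  have h3 : p.length = q.bypass.length := by rw [hpq]
  omega

lemma reach_dist_triangle {G : SimpleGraph V} {u v w : V} (h1 : G.Reachable u v)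
    (h2 : G.Reachable v w) : G.dist u w ≤ G.dist u v + G.dist v w := by
  obtain ⟨p, hp⟩ := h1.exists_walk_length_eq_dist
  obtain ⟨q, hq⟩ := h2.exists_walk_length_eq_dist
  calc G.dist u w ≤ (p.append q).length := SimpleGraph.dist_le _
    _ = _ := by rw [SimpleGraph.Walk.length_append, hp, hq]

lemma reach_of_mem_support {G : SimpleGraph V} {u v y : V} (p : G.Walk u v)
    (hy : y ∈ p.support) : G.Reachable u y := by
  classical
  exact ⟨p.takeUntil y hy⟩

lemma forced_aux {G : SimpleGraph V} [Fintype V] {u x v : V}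
    (q : G.Walk u x) : ∀ (p : G.Walk u v) (F : Set V), p.IsPath → q.IsPath →
    (∀ y ∈ p.support, y ≠ v → (G.neighborSet y).ncard ≤ 2) →
    q.length ≤ p.length →
    (∀ y ∈ F, y ∉ q.support) →
    (∀ z, G.Adj u z → z ∈ F ∨ z = p.getVert 1) →
    ∃ r : G.Walk x v, q.append r = p := by
  induction q with
  | nil => exact fun p F _ _ _ _ _ _ => ⟨p, Walk.nil_append p⟩
  | @cons u z x h q' ih =>
    intro p F hp hq hdeg hlen hF hnext
    cases p with
    | nil => simp at hlen
    | @cons _ z2 _ h2 p' =>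
      have hzF : z ∉ F := fun hzF => hF z hzF (by simp)
      have hz2 : z = z2 := by
        rcases hnext z h with h' | h'
        · exact absurd h' hzF
        · simpa [Walk.getVert_cons_succ] using h'
      subst hz2
      by_cases hzv : z = v
      · subst hzv
        have hp'nil : p' = Walk.nil := Walk.isPath_iff_eq_nil.mp hp.of_cons
        subst hp'nil
        have : q'.length = 0 := by
          have := hlen; simp only [Walk.length_cons, Walk.length_nil] at this; omega
        cases q' with
        | nil => exact ⟨Walk.nil, rfl⟩
        | cons _ _ => simp at this
      · cases p' with
        | nil => exact absurd rfl hzv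
        | @cons _ z3 _ h3 p'' =>
          have hzmem : z ∈ (Walk.cons h2 (Walk.cons h3 p'')).support := by simp
          have hdz : (G.neighborSet z).ncard ≤ 2 := hdeg z hzmem hzv
          have huz3 : u ≠ z3 := by
            intro he
            have := hp.support_nodup
            simp only [Walk.support_cons, List.nodup_cons] at this
            exact this.1 (by simp [he])
          have hsub : ({u, z3} : Set V) ⊆ G.neighborSet z := by
            rintro y (rfl | rfl)
            · exact h.symm
            · exact h3
          have hcard : ({u, z3} : Set V).ncard = 2 := Set.ncard_pair huz3
          have heq : ({u, z3} : Set V) = G.neighborSet z :=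
            Set.eq_of_subset_of_ncard_le hsub (by omega) (Set.toFinite _)
          obtain ⟨r, hr⟩ := ih (Walk.cons h3 p'') (insert u F) hp.of_cons hq.of_cons
            (fun y hy hyv => hdeg y (by simp [Walk.support_cons] at hy ⊢; tauto) hyv)
            (by simp only [Walk.length_cons] at hlen ⊢; omega)
            (by
              rintro y (rfl | hy)
              · have := hq.support_nodup
                simp only [Walk.support_cons, List.nodup_cons] at this
                exact this.1
              · intro hmem
                exact hF y hy (by simp [hmem]))
            (by
              intro w hw
              have : w ∈ ({u, z3} : Set V) := heq ▸ hw
              rcases this with rfl | rfl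
              · exact Or.inl (Set.mem_insert _ _)
              · exact Or.inr (by simp [Walk.getVert_cons_succ]))
          exact ⟨r, by rw [Walk.cons_append, hr]⟩

/-- Ball lemma: any vertex within `dist u v` of the terminal leaf `u` lies on the
path from `u` to its nearest branch vertex `v`. -/
lemma ball_additivity {G : SimpleGraph V} [Fintype V] (hG : G.IsAcyclic) {u v x : V}
    (ht : IsTerminalLeafOf G u v) (hx : G.Reachable u x) (hd : G.dist u x ≤ G.dist u v) :
    G.dist u x + G.dist x v = G.dist u v := by
  classical
  obtain ⟨hleaf, hbr, hreach, hmin⟩ := ht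
  obtain ⟨p0, -⟩ := hreach.exists_walk_length_eq_dist
  set p := p0.bypass with hpdef
  have hp : p.IsPath := p0.bypass_isPath
  have hplen : p.length = G.dist u v := path_length_eq_dist hG p hp
  obtain ⟨q0, -⟩ := hx.exists_walk_length_eq_dist
  set q := q0.bypass with hqdef
  have hq : q.IsPath := q0.bypass_isPath
  have hqlen : q.length = G.dist u x := path_length_eq_dist hG q hq
  have huv : u ≠ v := by
    intro he; rw [he] at hleaf
    exact absurd hleaf.symm (by have := hbr; unfold IsBranchVertex at this; omega)
  have hppos : 0 < p.length := by
    rw [hplen]; exact hreach.pos_dist_of_ne huv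
  have hdeg : ∀ y ∈ p.support, y ≠ v → (G.neighborSet y).ncard ≤ 2 := by
    intro y hy hyv
    by_contra hc
    push_neg at hc
    have hbry : IsBranchVertex G y := by unfold IsBranchVertex; omega
    have hry : G.Reachable u y := reach_of_mem_support p hy
    have h1 : G.dist u v < G.dist u y := hmin y hbry hry hyv
    have h2 : G.dist u y ≤ (p.takeUntil y hy).length := SimpleGraph.dist_le _
    have h3 : (p.takeUntil y hy).length ≤ p.length := Walk.length_takeUntil_le p hy
    omega
  have hadj1 : G.Adj u (p.getVert 1) := by
    simpa using p.adj_getVert_succ (by omega : 0 < p.length)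
  have hnext : ∀ z, G.Adj u z → z ∈ (∅ : Set V) ∨ z = p.getVert 1 := by
    intro z hz
    right
    by_contra hne
    have hsub : ({z, p.getVert 1} : Set V) ⊆ G.neighborSet u := by
      rintro y (rfl | rfl)
      · exact hz
      · exact hadj1
    have := Set.ncard_le_ncard hsub (Set.toFinite _)
    rw [Set.ncard_pair hne, hleaf] at this
    omega
  obtain ⟨r, hr⟩ := forced_aux q p ∅ hp hq hdeg (by omega) (by simp) hnext
  have hlen : q.length + r.length = p.length := by
    rw [← hr, Walk.length_append]
  have h4 : G.dist x v ≤ r.length := SimpleGraph.dist_le r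
  have h5 : G.dist u v ≤ G.dist u x + G.dist x v := reach_dist_triangle hx ⟨r⟩
  omega


lemma reach_dist_triangle' {G : SimpleGraph V} {u v w : V} (h1 : G.Reachable u v)
    (h2 : G.Reachable v w) : G.dist u w ≤ G.dist u v + G.dist v w := by
  obtain ⟨p, hp⟩ := h1.exists_walk_length_eq_dist
  obtain ⟨q, hq⟩ := h2.exists_walk_length_eq_dist
  calc G.dist u w ≤ (p.append q).length := SimpleGraph.dist_le _
    _ = _ := by rw [SimpleGraph.Walk.length_append, hp, hq]

lemma two_le_nbrs_of_internal {G : SimpleGraph V} [Fintype V] {u x v : V}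
    (h1 : G.Reachable u x) (h2 : G.Reachable x v)
    (hadd : G.dist u x + G.dist x v = G.dist u v)
    (hux : 1 ≤ G.dist u x) (hxv : 1 ≤ G.dist x v) : 2 ≤ (G.neighborSet x).ncard := by
  obtain ⟨p1, hp1⟩ := h1.exists_walk_length_eq_dist
  obtain ⟨p2, hp2⟩ := h2.exists_walk_length_eq_dist
  have hp1r : p1.reverse.length = G.dist u x := by rw [SimpleGraph.Walk.length_reverse, hp1]
  cases hrev : p1.reverse with
  | nil => rw [hrev] at hp1r; simp at hp1r; omega
  | @cons _ y1 _ hy1 q1 =>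
    cases p2 with
    | nil => simp at hp2; omega
    | @cons _ y2 _ hy2 q2 =>
      have hq1len : q1.length + 1 = G.dist u x := by
        rw [← hp1r, hrev]; simp
      have hq2len : q2.length + 1 = G.dist x v := by
        rw [← hp2]; simp
      have hdy1 : G.dist u y1 ≤ q1.length := by
        simpa using SimpleGraph.dist_le q1.reverse
      have hdy2 : G.dist y2 v ≤ q2.length := SimpleGraph.dist_le q2
      have hne : y1 ≠ y2 := by
        rintro rfl
        have ht : G.dist u v ≤ G.dist u y1 + G.dist y1 v :=
          reach_dist_triangle' ⟨q1.reverse⟩ ⟨q2⟩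
        omega
      have hsub : ({y1, y2} : Set V) ⊆ G.neighborSet x := by
        rintro y (rfl | rfl)
        · exact hy1
        · exact hy2
      have := Set.ncard_le_ncard hsub (Set.toFinite _)
      rwa [Set.ncard_pair hne] at this


lemma sup_edge_adj {X : SimpleGraph V} {a b : V} (hab : a ≠ b) {u w : V} :
    (X ⊔ fromEdgeSet {s(a, b)}).Adj u w ↔
      X.Adj u w ∨ (u = a ∧ w = b) ∨ (u = b ∧ w = a) := by
  simp only [sup_adj, fromEdgeSet_adj, Set.mem_singleton_iff, Sym2.eq_iff]
  constructor
  · rintro (h | ⟨(⟨rfl, rfl⟩ | ⟨rfl, rfl⟩), hne⟩)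
    · exact Or.inl h
    · exact Or.inr (Or.inl ⟨rfl, rfl⟩)
    · exact Or.inr (Or.inr ⟨rfl, rfl⟩)
  · rintro (h | ⟨rfl, rfl⟩ | ⟨rfl, rfl⟩)
    · exact Or.inl h
    · exact Or.inr ⟨Or.inl ⟨rfl, rfl⟩, hab⟩
    · exact Or.inr ⟨Or.inr ⟨rfl, rfl⟩, hab.symm⟩

lemma sup_edge_reach {Y : SimpleGraph V} {a b : V} (hab : a ≠ b)
    (hnr : ¬ Y.Reachable a b) {u w : V} :
    (Y ⊔ fromEdgeSet {s(a, b)}).Reachable u w ↔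
      Y.Reachable u w ∨ (Y.Reachable u a ∧ Y.Reachable b w) ∨
        (Y.Reachable u b ∧ Y.Reachable a w) := by
  constructor
  · rintro ⟨p⟩
    induction p with
    | nil => exact Or.inl (Reachable.refl _)
    | @cons u z w h q ih =>
      rcases (sup_edge_adj hab).mp h with h' | ⟨rfl, rfl⟩ | ⟨rfl, rfl⟩
      · have ruz : Y.Reachable u z := h'.reachable
        rcases ih with h1 | ⟨h1, h2⟩ | ⟨h1, h2⟩
        · exact Or.inl (ruz.trans h1)
        · exact Or.inr (Or.inl ⟨ruz.trans h1, h2⟩)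
        · exact Or.inr (Or.inr ⟨ruz.trans h1, h2⟩)
      · rcases ih with h1 | ⟨h1, h2⟩ | ⟨h1, h2⟩
        · exact Or.inr (Or.inl ⟨Reachable.refl _, h1⟩)
        · exact absurd h1.symm hnr
        · exact Or.inl h2
      · rcases ih with h1 | ⟨h1, h2⟩ | ⟨h1, h2⟩
        · exact Or.inr (Or.inr ⟨Reachable.refl _, h1⟩)
        · exact Or.inl h2
        · exact absurd h1 hnr
  · have hle : Y ≤ Y ⊔ fromEdgeSet {s(a, b)} := le_sup_left
    have hadj : (Y ⊔ fromEdgeSet {s(a, b)}).Adj a b :=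
      (sup_edge_adj hab).mpr (Or.inr (Or.inl ⟨rfl, rfl⟩))
    rintro (h | ⟨h1, h2⟩ | ⟨h1, h2⟩)
    · exact h.mono hle
    · exact ((h1.mono hle).trans hadj.reachable).trans (h2.mono hle)
    · exact ((h1.mono hle).trans hadj.symm.reachable).trans (h2.mono hle)

lemma sup_edge_sdiff {Y : SimpleGraph V} {a b : V} (hnadj : ¬ Y.Adj a b) :
    (Y ⊔ fromEdgeSet {s(a, b)}) \ fromEdgeSet {s(a, b)} = Y := by
  ext u w
  simp only [sdiff_adj, sup_adj, fromEdgeSet_adj, Set.mem_singleton_iff]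
  constructor
  · rintro ⟨h | h, h2⟩
    · exact h
    · exact absurd h h2
  · intro h
    refine ⟨Or.inl h, ?_⟩
    rintro ⟨he, -⟩
    rcases Sym2.eq_iff.mp he with ⟨rfl, rfl⟩ | ⟨rfl, rfl⟩
    · exact hnadj h
    · exact hnadj h.symm

lemma sup_edge_acyclic {X : SimpleGraph V} {a b : V} (hab : a ≠ b)
    (hX : X.IsAcyclic) (hnr : ¬ X.Reachable a b) :
    (X ⊔ fromEdgeSet {s(a, b)}).IsAcyclic := by
  have hnadj : ¬ X.Adj a b := fun h => hnr h.reachable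
  rw [isAcyclic_iff_forall_adj_isBridge]
  intro u w hadj
  rw [isBridge_iff]
  show ¬ ((X ⊔ fromEdgeSet {s(a, b)}) \ fromEdgeSet {s(u, w)}).Reachable u w
  rcases (sup_edge_adj hab).mp hadj with h' | ⟨rfl, rfl⟩ | ⟨rfl, rfl⟩
  · -- an original edge of X
    have hne : s(u, w) ≠ s(a, b) := by
      intro he
      rcases Sym2.eq_iff.mp he with ⟨rfl, rfl⟩ | ⟨rfl, rfl⟩
      · exact hnadj h'
      · exact hnadj h'.symm
    have hgeq : (X ⊔ fromEdgeSet {s(a, b)}) \ fromEdgeSet {s(u, w)} =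
        (X \ fromEdgeSet {s(u, w)}) ⊔ fromEdgeSet {s(a, b)} := by
      ext x y
      simp only [sdiff_adj, sup_adj, fromEdgeSet_adj, Set.mem_singleton_iff]
      constructor
      · rintro ⟨h1 | h1, h2⟩
        · exact Or.inl ⟨h1, h2⟩
        · exact Or.inr h1
      · rintro (⟨h1, h2⟩ | h1)
        · exact ⟨Or.inl h1, h2⟩
        · refine ⟨Or.inr h1, ?_⟩
          rintro ⟨he, -⟩
          exact hne (he ▸ h1.1)
    rw [hgeq]
    have hnr2 : ¬ (X \ fromEdgeSet {s(u, w)}).Reachable a b :=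
      fun h => hnr (h.mono sdiff_le)
    intro hre
    rcases (sup_edge_reach hab hnr2).mp hre with h1 | ⟨h1, h2⟩ | ⟨h1, h2⟩
    · exact (isAcyclic_iff_forall_adj_isBridge.mp hX h') h1
    · exact hnr ((h1.mono sdiff_le).symm.trans (h'.reachable.trans (h2.mono sdiff_le).symm))
    · exact hnr (((h2.mono sdiff_le).trans h'.reachable.symm).trans (h1.mono sdiff_le))
  · rw [sup_edge_sdiff hnadj]; exact hnr
  · rw [show s(u, w) = s(w, u) from Sym2.eq_swap, sup_edge_sdiff hnadj]
    exact fun h => hnr h.symm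

lemma reach_to_end {G : SimpleGraph V} {u v y : V} (p : G.Walk u v)
    (hy : y ∈ p.support) : G.Reachable y v := by
  classical
  exact ⟨p.dropUntil y hy⟩

lemma sup_edge_dist_same {X : SimpleGraph V} [Fintype V] {a b u w : V} (hab : a ≠ b)
    (hX : X.IsAcyclic) (hnr : ¬ X.Reachable a b) (h : X.Reachable u w) :
    (X ⊔ fromEdgeSet {s(a, b)}).dist u w = X.dist u w := by
  classical
  obtain ⟨p0, -⟩ := h.exists_walk_length_eq_dist
  have hp : p0.bypass.IsPath := p0.bypass_isPath
  have hplen : p0.bypass.length = X.dist u w := path_length_eq_dist hX _ hp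
  have hle : X ≤ X ⊔ fromEdgeSet {s(a, b)} := le_sup_left
  have hp' : (p0.bypass.mapLe hle).IsPath := (Walk.mapLe_isPath hle).mpr hp
  have h2 := path_length_eq_dist (sup_edge_acyclic hab hX hnr) _ hp'
  have h3 : (p0.bypass.mapLe hle).length = p0.bypass.length := by simp [Walk.mapLe]
  omega

lemma sup_edge_dist_cross {X : SimpleGraph V} [Fintype V] {a b u w : V} (hab : a ≠ b)
    (hX : X.IsAcyclic) (hnr : ¬ X.Reachable a b) (h1 : X.Reachable u a)
    (h2 : X.Reachable b w) :
    (X ⊔ fromEdgeSet {s(a, b)}).dist u w = X.dist u a + 1 + X.dist b w := by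
  classical
  obtain ⟨p0, -⟩ := h1.exists_walk_length_eq_dist
  obtain ⟨q0, -⟩ := h2.exists_walk_length_eq_dist
  set p := p0.bypass with hpdef
  set q := q0.bypass with hqdef
  have hp : p.IsPath := p0.bypass_isPath
  have hq : q.IsPath := q0.bypass_isPath
  have hplen : p.length = X.dist u a := path_length_eq_dist hX _ hp
  have hqlen : q.length = X.dist b w := path_length_eq_dist hX _ hq
  have hle : X ≤ X ⊔ fromEdgeSet {s(a, b)} := le_sup_left
  have hadj : (X ⊔ fromEdgeSet {s(a, b)}).Adj a b :=
    (sup_edge_adj hab).mpr (Or.inr (Or.inl ⟨rfl, rfl⟩))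
  set W : (X ⊔ fromEdgeSet {s(a, b)}).Walk u w :=
    (p.mapLe hle).append (Walk.cons hadj (q.mapLe hle)) with hWdef
  have hsp : (p.mapLe hle).support = p.support := by
    rw [Walk.mapLe, Walk.support_map]
    exact List.map_congr_left (fun x _ => rfl) |>.trans (List.map_id _)
  have hsq : (q.mapLe hle).support = q.support := by
    rw [Walk.mapLe, Walk.support_map]
    exact List.map_congr_left (fun x _ => rfl) |>.trans (List.map_id _)
  have hsupp : W.support = p.support ++ q.support := by
    rw [hWdef, Walk.support_append, Walk.support_cons, hsp, hsq]
    simp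
  have hdisj : ∀ y, y ∈ p.support → y ∈ q.support → False := by
    intro y hyp hyq
    exact hnr (((reach_to_end p hyp).symm).trans ((reach_of_mem_support q hyq).symm))
  have hW : W.IsPath := by
    rw [Walk.isPath_def, hsupp]
    exact List.Nodup.append hp.support_nodup hq.support_nodup
      (fun y hyp hyq => hdisj y hyp hyq)
  have hlen : W.length = p.length + 1 + q.length := by
    rw [hWdef]
    simp [Walk.length_append, Walk.length_cons, Walk.mapLe, Walk.length_map]
    omega
  have := path_length_eq_dist (sup_edge_acyclic hab hX hnr) W hW
  omega

lemma sup_edge_nbrs_ne {X : SimpleGraph V} {a b : V} (hab : a ≠ b) {x : V}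
    (hxa : x ≠ a) (hxb : x ≠ b) :
    (X ⊔ fromEdgeSet {s(a, b)}).neighborSet x = X.neighborSet x := by
  ext y
  simp only [mem_neighborSet, sup_edge_adj hab]
  constructor
  · rintro (h | ⟨rfl, rfl⟩ | ⟨rfl, rfl⟩)
    · exact h
    · exact absurd rfl hxa
    · exact absurd rfl hxb
  · exact fun h => Or.inl h

lemma sup_edge_nbrs_a {X : SimpleGraph V} {a b : V} (hab : a ≠ b) :
    (X ⊔ fromEdgeSet {s(a, b)}).neighborSet a = insert b (X.neighborSet a) := by
  ext y
  constructor
  · intro h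
    rcases (sup_edge_adj hab).mp h with h' | ⟨-, rfl⟩ | ⟨h', -⟩
    · exact Set.mem_insert_iff.mpr (Or.inr h')
    · exact Set.mem_insert _ _
    · exact absurd h' hab
  · intro h
    rcases Set.mem_insert_iff.mp h with rfl | h'
    · exact (sup_edge_adj hab).mpr (Or.inr (Or.inl ⟨rfl, rfl⟩))
    · exact (sup_edge_adj hab).mpr (Or.inl h')

lemma sup_edge_nbrs_b {X : SimpleGraph V} {a b : V} (hab : a ≠ b) :
    (X ⊔ fromEdgeSet {s(a, b)}).neighborSet b = insert a (X.neighborSet b) := by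
  have : (s(a, b) : Sym2 V) = s(b, a) := Sym2.eq_swap.symm
  rw [this]
  exact sup_edge_nbrs_a hab.symm

lemma sup_edge_ncard_a {X : SimpleGraph V} [Fintype V] {a b : V} (hab : a ≠ b)
    (hnr : ¬ X.Reachable a b) :
    ((X ⊔ fromEdgeSet {s(a, b)}).neighborSet a).ncard = (X.neighborSet a).ncard + 1 := by
  rw [sup_edge_nbrs_a hab]
  exact Set.ncard_insert_of_notMem (fun h => hnr (Adj.reachable h)) (Set.toFinite _)

lemma sup_edge_ncard_b {X : SimpleGraph V} [Fintype V] {a b : V} (hab : a ≠ b)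
    (hnr : ¬ X.Reachable a b) :
    ((X ⊔ fromEdgeSet {s(a, b)}).neighborSet b).ncard = (X.neighborSet b).ncard + 1 := by
  rw [sup_edge_nbrs_b hab]
  exact Set.ncard_insert_of_notMem (fun h => hnr (Adj.reachable h).symm) (Set.toFinite _)

lemma nbrs_mono {X : SimpleGraph V} [Fintype V] {Y : SimpleGraph V} (h : X ≤ Y) (x : V) :
    (X.neighborSet x).ncard ≤ (Y.neighborSet x).ncard :=
  Set.ncard_le_ncard (fun _ hy => h hy) (Set.toFinite _)

lemma branch_mono {X : SimpleGraph V} [Fintype V] {Y : SimpleGraph V} (h : X ≤ Y) {x : V}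
    (hb : IsBranchVertex X x) : IsBranchVertex Y x :=
  le_trans hb (nbrs_mono h x)

lemma sup_edge_branch_new {X : SimpleGraph V} [Fintype V] {a b : V} (hab : a ≠ b)
    (hnr : ¬ X.Reachable a b) {x : V}
    (hb : IsBranchVertex (X ⊔ fromEdgeSet {s(a, b)}) x) (hnb : ¬ IsBranchVertex X x) :
    (x = a ∨ x = b) ∧ (X.neighborSet x).ncard = 2 := by
  unfold IsBranchVertex at hb hnb
  by_cases hxa : x = a
  · subst hxa
    rw [sup_edge_ncard_a hab hnr] at hb
    exact ⟨Or.inl rfl, by omega⟩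
  by_cases hxb : x = b
  · subst hxb
    rw [sup_edge_ncard_b hab hnr] at hb
    exact ⟨Or.inr rfl, by omega⟩
  · rw [sup_edge_nbrs_ne hab hxa hxb] at hb
    omega

lemma sup_edge_branch_of_two {X : SimpleGraph V} [Fintype V] {a b : V} (hab : a ≠ b)
    (hnr : ¬ X.Reachable a b) {x : V} (hx : x = a ∨ x = b)
    (h2 : (X.neighborSet x).ncard = 2) :
    IsBranchVertex (X ⊔ fromEdgeSet {s(a, b)}) x := by
  unfold IsBranchVertex
  rcases hx with rfl | rfl
  · rw [sup_edge_ncard_a hab hnr]; omega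
  · rw [sup_edge_ncard_b hab hnr]; omega

lemma sup_edge_leaf_iff {X : SimpleGraph V} [Fintype V] {a b : V} (hab : a ≠ b)
    (hnr : ¬ X.Reachable a b) (hda : 1 ≤ (X.neighborSet a).ncard)
    (hdb : 1 ≤ (X.neighborSet b).ncard) {x : V} :
    IsLeaf (X ⊔ fromEdgeSet {s(a, b)}) x ↔ IsLeaf X x ∧ x ≠ a ∧ x ≠ b := by
  unfold IsLeaf
  by_cases hxa : x = a
  · subst hxa
    rw [sup_edge_ncard_a hab hnr]
    simp only [ne_eq, not_true_eq_false, false_and, and_false, iff_false]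
    omega
  by_cases hxb : x = b
  · subst hxb
    rw [sup_edge_ncard_b hab hnr]
    simp only [ne_eq, not_true_eq_false, and_false, iff_false]
    omega
  · rw [sup_edge_nbrs_ne hab hxa hxb]
    simp [hxa, hxb]

/-- A vertex with no neighbors forms a single-vertex component, which is a path graph. -/
lemma isPathGraph_of_isolated {X : SimpleGraph V} {x : V}
    (h : X.neighborSet x = ∅) :
    IsPathGraph (X.induce (X.connectedComponentMk x).supp) := by
  have hkey : ∀ y, X.Reachable x y → y = x := by
    intro y hy
    obtain ⟨p⟩ := hy
    cases p with
    | nil => rfl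
    | cons hadj q => exact absurd hadj (by simp [← SimpleGraph.mem_neighborSet, h])
  have hmem : ∀ y : V, y ∈ (X.connectedComponentMk x).supp → y = x := by
    intro y hy
    have : X.Reachable y x := (SimpleGraph.ConnectedComponent.eq).mp hy
    exact (hkey y this.symm)
  refine ⟨1, ⟨⟨⟨fun _ => 0, fun _ => ⟨x, rfl⟩, ?_, ?_⟩, ?_⟩⟩⟩
  · intro ⟨y, hy⟩
    exact Subtype.ext (hmem y hy).symm
  · intro i
    exact (Subsingleton.elim _ _)
  · intro ⟨y, hy⟩ ⟨z, hz⟩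
    constructor
    · intro hadj
      exact absurd (Subsingleton.elim (0 : Fin 1) 0 ▸ hadj) (SimpleGraph.irrefl _)
    · intro hadj
      have hyz : y = z := (hmem y hy).trans (hmem z hz).symm
      have : ¬ (X.induce (X.connectedComponentMk x).supp).Adj ⟨y, hy⟩ ⟨z, hz⟩ := by
        intro hc
        exact absurd (Subtype.ext hyz : (⟨y, hy⟩ : (X.connectedComponentMk x).supp) = ⟨z, hz⟩)
          hc.ne
      exact absurd hadj this

lemma same_side_unique {X : SimpleGraph V} {a b u c c' : V} (hnr : ¬ X.Reachable a b)
    (hc : c = a ∨ c = b) (hc' : c' = a ∨ c' = b)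
    (h1 : X.Reachable u c) (h2 : X.Reachable u c') : c = c' := by
  rcases hc with rfl | rfl <;> rcases hc' with rfl | rfl
  · rfl
  · exact absurd (h1.symm.trans h2) hnr
  · exact absurd (h2.symm.trans h1) hnr
  · rfl

lemma lost_lemma {X : SimpleGraph V} [Fintype V] {a b : V} (hab : a ≠ b)
    (hX : X.IsAcyclic) (hnr : ¬ X.Reachable a b) {v : V}
    (hv : IsExteriorBranchVertex X v)
    (hv' : ¬ IsExteriorBranchVertex (X ⊔ fromEdgeSet {s(a, b)}) v) :
    ∃ c, (c = a ∨ c = b) ∧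
      ((IsLeaf X c ∧ IsTerminalLeafOf X c v) ∨
       ((X.neighborSet c).ncard = 2 ∧
        IsExteriorBranchVertex (X ⊔ fromEdgeSet {s(a, b)}) c ∧ X.Reachable c v ∧
        (∀ w, IsBranchVertex X w → X.Reachable c w → w ≠ v → X.dist c v < X.dist c w))) := by
  obtain ⟨u, hterm⟩ := hv
  obtain ⟨huleaf, hvbr, hureach, hmin⟩ := hterm
  by_cases hu : u = a ∨ u = b
  · exact ⟨u, hu, Or.inl ⟨huleaf, huleaf, hvbr, hureach, hmin⟩⟩
  push_neg at hu
  obtain ⟨hua, hub⟩ := hu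
  have hu' : IsLeaf (X ⊔ fromEdgeSet {s(a, b)}) u := by
    unfold IsLeaf
    rw [sup_edge_nbrs_ne hab hua hub]
    exact huleaf
  have hvbr' : IsBranchVertex (X ⊔ fromEdgeSet {s(a, b)}) v := branch_mono le_sup_left hvbr
  have hur' : (X ⊔ fromEdgeSet {s(a, b)}).Reachable u v := hureach.mono le_sup_left
  have hnot : ¬ IsTerminalLeafOf (X ⊔ fromEdgeSet {s(a, b)}) u v := fun h => hv' ⟨u, h⟩
  unfold IsTerminalLeafOf at hnot
  push_neg at hnot
  obtain ⟨w, hwbr', hwreach', hwne, hwdist⟩ := hnot hu' hvbr' hur'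
  have hdv' : (X ⊔ fromEdgeSet {s(a, b)}).dist u v = X.dist u v :=
    sup_edge_dist_same hab hX hnr hureach
  -- produce c ∈ {a, b} with `X.Reachable u c`, `X.dist u c ≤ X.dist u v`, `c ≠ v`,
  -- and `(X.neighborSet c).ncard ≤ 2`.
  have key : ∃ c, (c = a ∨ c = b) ∧ X.Reachable u c ∧ X.dist u c ≤ X.dist u v ∧ c ≠ v ∧
      ¬ IsBranchVertex X c := by
    by_cases hwX : X.Reachable u w
    · have hdw : (X ⊔ fromEdgeSet {s(a, b)}).dist u w = X.dist u w :=
        sup_edge_dist_same hab hX hnr hwX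
      have hwnotbr : ¬ IsBranchVertex X w := by
        intro hbr
        have := hmin w hbr hwX hwne
        omega
      obtain ⟨hcab, hc2⟩ := sup_edge_branch_new hab hnr hwbr' hwnotbr
      exact ⟨w, hcab, hwX, by omega, hwne, hwnotbr⟩
    · rcases (sup_edge_reach hab hnr).mp hwreach' with h1 | ⟨h1, h2⟩ | ⟨h1, h2⟩
      · exact absurd h1 hwX
      · have hdw : (X ⊔ fromEdgeSet {s(a, b)}).dist u w = X.dist u a + 1 + X.dist b w :=
          sup_edge_dist_cross hab hX hnr h1 h2
        have hlt : X.dist u a < X.dist u v := by omega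
        have hnbr : ¬ IsBranchVertex X a := by
          intro hbr
          by_cases hav : a = v
          · subst hav; omega
          · have := hmin a hbr h1 hav; omega
        refine ⟨a, Or.inl rfl, h1, by omega, ?_, hnbr⟩
        intro hav; subst hav; omega
      · have hswap : (s(a, b) : Sym2 V) = s(b, a) := Sym2.eq_swap.symm
        rw [hswap] at hwreach' hwdist hdv'
        have hnr' : ¬ X.Reachable b a := fun h => hnr h.symm
        have hdw : (X ⊔ fromEdgeSet {s(b, a)}).dist u w = X.dist u b + 1 + X.dist a w :=
          sup_edge_dist_cross hab.symm hX hnr' h1 h2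
        have hlt : X.dist u b < X.dist u v := by omega
        have hnbr : ¬ IsBranchVertex X b := by
          intro hbr
          by_cases hbv : b = v
          · subst hbv; omega
          · have := hmin b hbr h1 hbv; omega
        refine ⟨b, Or.inr rfl, h1, by omega, ?_, hnbr⟩
        intro hbv; subst hbv; omega
  obtain ⟨c, hcab, hucreach, hducv, hcv, hcnotbr⟩ := key
  have hcu : u ≠ c := by rcases hcab with rfl | rfl <;> [exact hua; exact hub]
  have hadd : X.dist u c + X.dist c v = X.dist u v :=
    ball_additivity hX ⟨huleaf, hvbr, hureach, hmin⟩ hucreach hducv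
  have hcvreach : X.Reachable c v := hucreach.symm.trans hureach
  have hd1 : 1 ≤ X.dist u c := hucreach.pos_dist_of_ne hcu
  have hd2 : 1 ≤ X.dist c v := hcvreach.pos_dist_of_ne hcv
  have hge2 : 2 ≤ (X.neighborSet c).ncard :=
    two_le_nbrs_of_internal hucreach hcvreach hadd hd1 hd2
  have hc2 : (X.neighborSet c).ncard = 2 := by
    unfold IsBranchVertex at hcnotbr; omega
  have hstrict : X.dist u c < X.dist u v := by omega
  -- the nearest-branch-vertex property of `v` seen from `c`
  have hnear : ∀ w', IsBranchVertex X w' → X.Reachable c w' → w' ≠ v →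
      X.dist c v < X.dist c w' := by
    intro w' hbr hrw hne
    have hruw : X.Reachable u w' := hucreach.trans hrw
    have h5 : X.dist u v < X.dist u w' := hmin w' hbr hruw hne
    have h6 : X.dist u w' ≤ X.dist u c + X.dist c w' := reach_dist_triangle hucreach hrw
    omega
  -- c is an exterior branch vertex of the new graph, witnessed by u
  have hcbr' : IsBranchVertex (X ⊔ fromEdgeSet {s(a, b)}) c :=
    sup_edge_branch_of_two hab hnr hcab hc2
  have hex : IsExteriorBranchVertex (X ⊔ fromEdgeSet {s(a, b)}) c := by
    refine ⟨u, hu', hcbr', hucreach.mono le_sup_left, ?_⟩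
    intro w' hbr' hre' hnec
    have hduc' : (X ⊔ fromEdgeSet {s(a, b)}).dist u c = X.dist u c :=
      sup_edge_dist_same hab hX hnr hucreach
    by_cases hw'X : X.Reachable u w'
    · have hdw' : (X ⊔ fromEdgeSet {s(a, b)}).dist u w' = X.dist u w' :=
        sup_edge_dist_same hab hX hnr hw'X
      by_cases hbrX : IsBranchVertex X w'
      · by_cases hw'v : w' = v
        · subst hw'v; omega
        · have := hmin w' hbrX hw'X hw'v; omega
      · obtain ⟨hw'ab, -⟩ := sup_edge_branch_new hab hnr hbr' hbrX
        exact absurd (same_side_unique hnr hw'ab hcab hw'X hucreach) hnec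
    · rcases (sup_edge_reach hab hnr).mp hre' with h1 | ⟨h1, h2⟩ | ⟨h1, h2⟩
      · exact absurd h1 hw'X
      · have hca : c = a := same_side_unique hnr hcab (Or.inl rfl) hucreach h1
        have hdw' : (X ⊔ fromEdgeSet {s(a, b)}).dist u w' = X.dist u a + 1 + X.dist b w' :=
          sup_edge_dist_cross hab hX hnr h1 h2
        rw [hca] at hduc' ⊢
        omega
      · have hcb : c = b := same_side_unique hnr hcab (Or.inr rfl) hucreach h1
        have hswap : (s(a, b) : Sym2 V) = s(b, a) := Sym2.eq_swap.symm
        have hnr' : ¬ X.Reachable b a := fun h => hnr h.symm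
        rw [hswap] at hduc' ⊢
        have hdw' : (X ⊔ fromEdgeSet {s(b, a)}).dist u w' = X.dist u b + 1 + X.dist a w' :=
          sup_edge_dist_cross hab.symm hX hnr' h1 h2
        rw [hcb] at hduc' ⊢
        omega
  exact ⟨c, hcab, Or.inr ⟨hc2, hex, hcvreach, hnear⟩⟩

lemma EX_branch {G : SimpleGraph V} {v : V} (h : IsExteriorBranchVertex G v) :
    IsBranchVertex G v := h.choose_spec.2.1

lemma terminal_unique {G : SimpleGraph V} {u v1 v2 : V}
    (h1 : IsTerminalLeafOf G u v1) (h2 : IsTerminalLeafOf G u v2) : v1 = v2 := by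
  by_contra hne
  have a1 := h1.2.2.2 v2 h2.2.1 h2.2.2.1 (fun h => hne h.symm)
  have a2 := h2.2.2.2 v1 h1.2.1 h1.2.2.1 hne
  omega

end Aux

theorem forestDim_add_edge_le {V : Type*} [Fintype V] (X : SimpleGraph V)
    (hX : X.IsAcyclic)
    (hcomp : ∀ c : X.ConnectedComponent, ¬ IsPathGraph (X.induce c.supp))
    (a b : V) (hab : a ≠ b) (hnr : ¬ X.Reachable a b) :
    forestDim (X ⊔ SimpleGraph.fromEdgeSet {s(a, b)}) ≤ forestDim X := by
  classical
  -- every vertex has a neighbor, since no component is a single vertex (a path graph)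
  have hdeg : ∀ x : V, 1 ≤ (X.neighborSet x).ncard := by
    intro x
    by_contra h
    push_neg at h
    have h0 : (X.neighborSet x).ncard = 0 := by omega
    have hempty : X.neighborSet x = ∅ := (Set.ncard_eq_zero (Set.toFinite _)).mp h0
    exact hcomp _ (isPathGraph_of_isolated hempty)
  set L : Set V := {x | IsLeaf X x} with hLdef
  set L' : Set V := {x | IsLeaf (X ⊔ SimpleGraph.fromEdgeSet {s(a, b)}) x} with hL'def
  set E : Set V := {x | IsExteriorBranchVertex X x} with hEdef
  set E' : Set V := {x | IsExteriorBranchVertex (X ⊔ SimpleGraph.fromEdgeSet {s(a, b)}) x}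
    with hE'def
  set S : Set V := L ∩ {a, b} with hSdef
  -- leaves of the new graph
  have hL : L' = L \ {a, b} := by
    ext x
    simp only [hL'def, hLdef, Set.mem_setOf_eq, Set.mem_diff, Set.mem_insert_iff,
      Set.mem_singleton_iff, sup_edge_leaf_iff hab hnr (hdeg a) (hdeg b)]
    tauto
  have hcardL : L.ncard = L'.ncard + S.ncard := by
    rw [hL, hSdef]
    have := Set.ncard_inter_add_ncard_diff_eq_ncard L {a, b} (Set.toFinite _)
    omega
  -- exterior branch vertices
  have hEX : E.ncard ≤ E'.ncard + S.ncard := by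
    have hmain : E.ncard ≤ (E' ∪ S).ncard := by
      set f : V → V := fun v =>
        if h : IsExteriorBranchVertex X v ∧
            ¬ IsExteriorBranchVertex (X ⊔ SimpleGraph.fromEdgeSet {s(a, b)}) v then
          Classical.choose (lost_lemma hab hX hnr h.1 h.2)
        else v with hfdef
      have hfspec : ∀ v, (h : IsExteriorBranchVertex X v ∧
          ¬ IsExteriorBranchVertex (X ⊔ SimpleGraph.fromEdgeSet {s(a, b)}) v) →
          (f v = Classical.choose (lost_lemma hab hX hnr h.1 h.2)) := by
        intro v h
        simp only [hfdef, dif_pos h]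
      have hfkeep : ∀ v, IsExteriorBranchVertex (X ⊔ SimpleGraph.fromEdgeSet {s(a, b)}) v →
          f v = v := by
        intro v h
        simp only [hfdef]
        rw [dif_neg]
        tauto
      apply Set.ncard_le_ncard_of_injOn f
      · -- maps into E' ∪ S
        intro v hv
        by_cases hv' : IsExteriorBranchVertex (X ⊔ SimpleGraph.fromEdgeSet {s(a, b)}) v
        · rw [hfkeep v hv']
          exact Or.inl hv'
        · have hh : IsExteriorBranchVertex X v ∧
              ¬ IsExteriorBranchVertex (X ⊔ SimpleGraph.fromEdgeSet {s(a, b)}) v := ⟨hv, hv'⟩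
          rw [hfspec v hh]
          obtain ⟨hcab, hcase⟩ := Classical.choose_spec (lost_lemma hab hX hnr hh.1 hh.2)
          rcases hcase with ⟨hleaf, -⟩ | ⟨-, hex, -, -⟩
          · refine Or.inr ⟨hleaf, ?_⟩
            rcases hcab with h | h
            · exact Set.mem_insert_iff.mpr (Or.inl h)
            · exact Set.mem_insert_iff.mpr (Or.inr (by simp [h]))
          · exact Or.inl hex
      · -- injective on E
        intro v1 hv1 v2 hv2 heq
        by_cases h1 : IsExteriorBranchVertex (X ⊔ SimpleGraph.fromEdgeSet {s(a, b)}) v1 <;>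
          by_cases h2 : IsExteriorBranchVertex (X ⊔ SimpleGraph.fromEdgeSet {s(a, b)}) v2
        · rwa [hfkeep v1 h1, hfkeep v2 h2] at heq
        · exfalso
          have hh2 : IsExteriorBranchVertex X v2 ∧
              ¬ IsExteriorBranchVertex (X ⊔ SimpleGraph.fromEdgeSet {s(a, b)}) v2 := ⟨hv2, h2⟩
          rw [hfkeep v1 h1, hfspec v2 hh2] at heq
          obtain ⟨-, hcase⟩ := Classical.choose_spec (lost_lemma hab hX hnr hh2.1 hh2.2)
          have hbr1 : IsBranchVertex X v1 := EX_branch hv1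
          unfold IsBranchVertex at hbr1
          rcases hcase with ⟨hleaf, -⟩ | ⟨h2c, -, -, -⟩
          · rw [← heq] at hleaf; unfold IsLeaf at hleaf; omega
          · rw [← heq] at h2c; omega
        · exfalso
          have hh1 : IsExteriorBranchVertex X v1 ∧
              ¬ IsExteriorBranchVertex (X ⊔ SimpleGraph.fromEdgeSet {s(a, b)}) v1 := ⟨hv1, h1⟩
          rw [hfkeep v2 h2, hfspec v1 hh1] at heq
          obtain ⟨-, hcase⟩ := Classical.choose_spec (lost_lemma hab hX hnr hh1.1 hh1.2)
          have hbr2 : IsBranchVertex X v2 := EX_branch hv2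
          unfold IsBranchVertex at hbr2
          rcases hcase with ⟨hleaf, -⟩ | ⟨h1c, -, -, -⟩
          · rw [heq] at hleaf; unfold IsLeaf at hleaf; omega
          · rw [heq] at h1c; omega
        · have hh1 : IsExteriorBranchVertex X v1 ∧
              ¬ IsExteriorBranchVertex (X ⊔ SimpleGraph.fromEdgeSet {s(a, b)}) v1 := ⟨hv1, h1⟩
          have hh2 : IsExteriorBranchVertex X v2 ∧
              ¬ IsExteriorBranchVertex (X ⊔ SimpleGraph.fromEdgeSet {s(a, b)}) v2 := ⟨hv2, h2⟩
          rw [hfspec v1 hh1, hfspec v2 hh2] at heq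
          obtain ⟨-, hcase1⟩ := Classical.choose_spec (lost_lemma hab hX hnr hh1.1 hh1.2)
          obtain ⟨-, hcase2⟩ := Classical.choose_spec (lost_lemma hab hX hnr hh2.1 hh2.2)
          rw [heq] at hcase1
          rcases hcase1 with ⟨hleaf1, hterm1⟩ | ⟨h2c1, -, hre1, hnear1⟩ <;>
            rcases hcase2 with ⟨hleaf2, hterm2⟩ | ⟨h2c2, -, hre2, hnear2⟩
          · exact terminal_unique hterm1 hterm2
          · exfalso; exact absurd ((Eq.symm (hleaf1 : (X.neighborSet _).ncard = 1)).trans h2c2) (by decide)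
          · exfalso; exact absurd ((Eq.symm (hleaf2 : (X.neighborSet _).ncard = 1)).trans h2c1) (by decide)
          · by_contra hne
            have b1 : IsBranchVertex X v1 := EX_branch hv1
            have b2 : IsBranchVertex X v2 := EX_branch hv2
            have q1 := hnear1 v2 b2 hre2 (fun h => hne h.symm)
            have q2 := hnear2 v1 b1 hre1 hne
            omega
    calc E.ncard ≤ (E' ∪ S).ncard := hmain
      _ ≤ E'.ncard + S.ncard := Set.ncard_union_le _ _
  -- number of exterior branch vertices is at most the number of leaves
  have hEL : E.ncard ≤ L.ncard := by
    set g : V → V := fun v =>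
      if h : IsExteriorBranchVertex X v then Classical.choose h else v with hgdef
    apply Set.ncard_le_ncard_of_injOn g
    · intro v hv
      have : g v = Classical.choose hv := by rw [hgdef]; exact dif_pos hv
      rw [this]
      exact (Classical.choose_spec hv).1
    · intro v1 hv1 v2 hv2 heq
      have e1 : g v1 = Classical.choose hv1 := by rw [hgdef]; exact dif_pos hv1
      have e2 : g v2 = Classical.choose hv2 := by rw [hgdef]; exact dif_pos hv2
      rw [e1, e2] at heq
      have s1 := Classical.choose_spec hv1
      have s2 := Classical.choose_spec hv2
      rw [heq] at s1
      exact terminal_unique s1 s2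
  -- conclude
  show L'.ncard - E'.ncard ≤ L.ncard - E.ncard
  omega
end
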